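/- In the Euclidean circle-packing triangle with radii r₁, r₂, r₃ > 0 and angles Θ₁, Θ₂, Θ₃ ∈ [0, π/2], the symmetry relation (∂θ₁/∂r₂)·r₂ = (∂θ₂/∂r₁)·r₁ holds, where θ_i is the angle at vertex i. -/

import Mathlib

/-!
By the law of cosines `θ₁ = arccos φ` with `φ = (ℓ₂² + ℓ₃² - ℓ₁²) / (2ℓ₂ℓ₃)`, and
`1 - φ² = H / (4ℓ₂²ℓ₃²)` where `H` is sixteen times the squared area, a symmetric function
of the `ℓᵢ²`. Hence `r₂ · ∂θ₁/∂r₂` is a polynomial in the radii and the `cos Θᵢ` divided by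
`ℓ₃² √H`, and this expression is invariant under exchanging `(r₁, Θ₁)` with `(r₂, Θ₂)`.
Weights `Θᵢ ≤ π/2` make every edge longer than each radius at its ends, which forces the
strict triangle inequalities, so `H > 0` and `arccos` is differentiable at `φ`.
-/

open Real

/-- Euclidean distance between the centers of two circles of radii `a`, `b`
meeting at angle `θ`. -/
noncomputable def circleEdgeLength (a b θ : ℝ) : ℝ :=
  Real.sqrt (a ^ 2 + b ^ 2 + 2 * a * b * Real.cos θ)

/-- The angle at the center of the first circle in the circle-packing triangle
with radii `r₁ r₂ r₃` and weights `Θ₁ Θ₂ Θ₃` (where `Θᵢ` is the weight of the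
edge opposite to vertex `i`), by the law of cosines. -/
noncomputable def circleAngle (Θ₁ Θ₂ Θ₃ r₁ r₂ r₃ : ℝ) : ℝ :=
  Real.arccos ((circleEdgeLength r₁ r₃ Θ₂ ^ 2 + circleEdgeLength r₁ r₂ Θ₃ ^ 2 -
      circleEdgeLength r₂ r₃ Θ₁ ^ 2) /
    (2 * circleEdgeLength r₁ r₃ Θ₂ * circleEdgeLength r₁ r₂ Θ₃))

/-- Sixteen times the squared area of a triangle with squared side lengths `p`, `q`, `r`
(Heron's formula). -/
def heron (p q r : ℝ) : ℝ := 2 * (p * q + q * r + r * p) - (p ^ 2 + q ^ 2 + r ^ 2)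

theorem heron_comm (p q r : ℝ) : heron r q p = heron p q r := by
  unfold heron; ring

theorem heron_sq (u v w : ℝ) :
    heron (u ^ 2) (v ^ 2) (w ^ 2) = (u + v + w) * (-u + v + w) * (u - v + w) * (u + v - w) := by
  unfold heron; ring

theorem heron_sq_pos {u v w : ℝ} (hu : u < v + w) (hv : v < u + w) (hw : w < u + v) :
    0 < heron (u ^ 2) (v ^ 2) (w ^ 2) := by
  rw [heron_sq]
  have : 0 < u + v + w := by linarith
  have : 0 < -u + v + w := by linarith
  have : 0 < u - v + w := by linarith
  have : 0 < u + v - w := by linarith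
  positivity

theorem one_sub_sq_cosineRule {p q : ℝ} (hp : 0 < p) (hq : 0 < q) (r : ℝ) :
    1 - ((p + q - r) / (2 * √p * √q)) ^ 2 = heron p q r / (2 * √p * √q) ^ 2 := by
  have hpq : (2 * √p * √q) ^ 2 = 4 * p * q := by
    rw [mul_pow, mul_pow, sq_sqrt hp.le, sq_sqrt hq.le]; ring
  rw [div_pow, hpq]
  unfold heron
  field_simp
  ring

theorem hasDerivAt_arccos_cosineRule {P Q R : ℝ → ℝ} {P' Q' R' t : ℝ}
    (hP : HasDerivAt P P' t) (hQ : HasDerivAt Q Q' t) (hR : HasDerivAt R R' t)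
    (hP0 : 0 < P t) (hQ0 : 0 < Q t) (hH : 0 < heron (P t) (Q t) (R t)) :
    HasDerivAt (fun s => arccos ((P s + Q s - R s) / (2 * √(P s) * √(Q s))))
      (((P t + Q t - R t) * (P' * Q t + P t * Q') - 2 * P t * Q t * (P' + Q' - R')) /
        (2 * P t * Q t * √(heron (P t) (Q t) (R t)))) t := by
  set φ := (P t + Q t - R t) / (2 * √(P t) * √(Q t))
  have hsqP := sqrt_pos.2 hP0
  have hsqQ := sqrt_pos.2 hQ0
  have h1φ := one_sub_sq_cosineRule hP0 hQ0 (R t)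
  have hφ : φ ^ 2 < 1 := by
    have : 0 < heron (P t) (Q t) (R t) / (2 * √(P t) * √(Q t)) ^ 2 := by positivity
    linarith
  have hφ₁ : φ ≠ -1 := by rintro h; rw [h] at hφ; norm_num at hφ
  have hφ₂ : φ ≠ 1 := by rintro h; rw [h] at hφ; norm_num at hφ
  have hden := ((hP.sqrt hP0.ne').const_mul 2).mul (hQ.sqrt hQ0.ne')
  have hquot := ((hP.add hQ).sub hR).div hden
    (show 2 * √(P t) * √(Q t) ≠ 0 by positivity)
  refine ((hasDerivAt_arccos hφ₁ hφ₂).comp t hquot).congr_deriv ?_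
  rw [h1φ, sqrt_div' _ (by positivity), sqrt_sq (by positivity)]
  have hP2 := sq_sqrt hP0.le
  have hQ2 := sq_sqrt hQ0.le
  have hsqH := sqrt_pos.2 hH
  simp only [Pi.mul_apply, Pi.add_apply, Pi.sub_apply]
  generalize √(P t) = a at *
  generalize √(Q t) = b at *
  generalize √(heron (P t) (Q t) (R t)) = h at *
  rw [← hP2, ← hQ2]
  field_simp
  ring

theorem circleEdgeLength_nonneg (a b θ : ℝ) : 0 ≤ circleEdgeLength a b θ := sqrt_nonneg _

theorem circleEdgeLength_sq (a b θ : ℝ) :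
    circleEdgeLength a b θ ^ 2 = a ^ 2 + b ^ 2 + 2 * a * b * cos θ := by
  refine sq_sqrt ?_
  -- `a² + b² + 2ab cos θ = (a + b cos θ)² + (b sin θ)²`
  nlinarith [sq_nonneg (a + b * cos θ), sq_nonneg (b * sin θ), sin_sq_add_cos_sq θ]

theorem circleEdgeLength_comm (a b θ : ℝ) :
    circleEdgeLength a b θ = circleEdgeLength b a θ := by
  unfold circleEdgeLength; ring_nf

theorem circleEdgeLength_le_add {a b : ℝ} (ha : 0 ≤ a) (hb : 0 ≤ b) (θ : ℝ) :
    circleEdgeLength a b θ ≤ a + b :=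
  sqrt_le_iff.2 ⟨by positivity, by nlinarith [cos_le_one θ, mul_nonneg ha hb]⟩

theorem lt_circleEdgeLength {a b θ : ℝ} (ha : 0 ≤ a) (hb : 0 < b) (hθ : 0 ≤ cos θ) :
    a < circleEdgeLength a b θ :=
  (lt_sqrt ha).2 (by nlinarith [mul_nonneg (mul_nonneg ha hb.le) hθ])

theorem circleEdgeLength_lt_add {a b c θ φ ψ : ℝ} (ha : 0 ≤ a) (hb : 0 ≤ b) (hc : 0 < c)
    (hφ : 0 ≤ cos φ) (hψ : 0 ≤ cos ψ) :
    circleEdgeLength a b θ < circleEdgeLength a c φ + circleEdgeLength b c ψ :=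
  (circleEdgeLength_le_add ha hb θ).trans_lt
    (add_lt_add (lt_circleEdgeLength ha hc hφ) (lt_circleEdgeLength hb hc hψ))

theorem heron_circleEdgeLength_pos {r₁ r₂ r₃ Θ₁ Θ₂ Θ₃ : ℝ}
    (hr₁ : 0 < r₁) (hr₂ : 0 < r₂) (hr₃ : 0 < r₃)
    (hΘ₁ : 0 ≤ cos Θ₁) (hΘ₂ : 0 ≤ cos Θ₂) (hΘ₃ : 0 ≤ cos Θ₃) :
    0 < heron (circleEdgeLength r₁ r₃ Θ₂ ^ 2) (circleEdgeLength r₁ r₂ Θ₃ ^ 2)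
      (circleEdgeLength r₂ r₃ Θ₁ ^ 2) := by
  have h₂ := circleEdgeLength_lt_add (θ := Θ₂) hr₁.le hr₃.le hr₂ hΘ₃ hΘ₁
  have h₃ := circleEdgeLength_lt_add (θ := Θ₃) hr₁.le hr₂.le hr₃ hΘ₂ hΘ₁
  have h₁ := circleEdgeLength_lt_add (θ := Θ₁) hr₂.le hr₃.le hr₁ hΘ₃ hΘ₂
  rw [circleEdgeLength_comm r₃ r₂] at h₂
  rw [circleEdgeLength_comm r₂ r₁, circleEdgeLength_comm r₃ r₁] at h₁
  exact heron_sq_pos h₂ h₃ (by linarith)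

theorem hasDerivAt_circleEdgeLength_sq (a b θ : ℝ) :
    HasDerivAt (fun s => circleEdgeLength a s θ ^ 2) (2 * b + 2 * a * cos θ) b := by
  have h := ((hasDerivAt_pow 2 b).const_add (a ^ 2)).add
    (((hasDerivAt_id' b).const_mul (2 * a)).mul_const (cos θ))
  simp only [circleEdgeLength_sq]
  exact h.congr_deriv (by norm_num)

theorem hasDerivAt_circleAngle {r₁ r₂ r₃ Θ₁ Θ₂ Θ₃ : ℝ}
    (hr₁ : 0 < r₁) (hr₂ : 0 < r₂) (hr₃ : 0 < r₃)
    (hΘ₁ : 0 ≤ cos Θ₁) (hΘ₂ : 0 ≤ cos Θ₂) (hΘ₃ : 0 ≤ cos Θ₃) :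
    HasDerivAt (fun s => circleAngle Θ₁ Θ₂ Θ₃ r₁ s r₃)
      (((circleEdgeLength r₁ r₃ Θ₂ ^ 2 + circleEdgeLength r₁ r₂ Θ₃ ^ 2 -
            circleEdgeLength r₂ r₃ Θ₁ ^ 2) * (r₂ + r₁ * cos Θ₃) -
          2 * circleEdgeLength r₁ r₂ Θ₃ ^ 2 * (r₁ * cos Θ₃ - r₃ * cos Θ₁)) /
        (circleEdgeLength r₁ r₂ Θ₃ ^ 2 * √(heron (circleEdgeLength r₁ r₃ Θ₂ ^ 2)
          (circleEdgeLength r₁ r₂ Θ₃ ^ 2) (circleEdgeLength r₂ r₃ Θ₁ ^ 2)))) r₂ := by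
  have hR := hasDerivAt_circleEdgeLength_sq r₃ r₂ Θ₁
  simp only [circleEdgeLength_comm r₃] at hR
  have hP : 0 < circleEdgeLength r₁ r₃ Θ₂ := hr₁.trans (lt_circleEdgeLength hr₁.le hr₃ hΘ₂)
  have hQ : 0 < circleEdgeLength r₁ r₂ Θ₃ := hr₁.trans (lt_circleEdgeLength hr₁.le hr₂ hΘ₃)
  have key := hasDerivAt_arccos_cosineRule (hasDerivAt_const r₂ _)
    (hasDerivAt_circleEdgeLength_sq r₁ r₂ Θ₃) hR (pow_pos hP 2) (pow_pos hQ 2)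
    (heron_circleEdgeLength_pos hr₁ hr₂ hr₃ hΘ₁ hΘ₂ hΘ₃)
  simp only [sqrt_sq, circleEdgeLength_nonneg] at key
  refine key.congr_deriv ?_
  field_simp
  ring

/-- Here `circleAngle Θ₂ Θ₁ Θ₃ r₂ r₁ r₃` is the angle `θ₂` at the second vertex. -/
theorem circleAngle_deriv_symmetry
    (r₁ r₂ r₃ Θ₁ Θ₂ Θ₃ : ℝ)
    (hr₁ : 0 < r₁) (hr₂ : 0 < r₂) (hr₃ : 0 < r₃)
    (hΘ₁ : Θ₁ ∈ Set.Icc 0 (π / 2)) (hΘ₂ : Θ₂ ∈ Set.Icc 0 (π / 2))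
    (hΘ₃ : Θ₃ ∈ Set.Icc 0 (π / 2)) :
    deriv (fun s => circleAngle Θ₁ Θ₂ Θ₃ r₁ s r₃) r₂ * r₂ =
      deriv (fun s => circleAngle Θ₂ Θ₁ Θ₃ r₂ s r₃) r₁ * r₁ := by
  have hcos {Θ : ℝ} (hΘ : Θ ∈ Set.Icc 0 (π / 2)) : 0 ≤ cos Θ :=
    cos_nonneg_of_mem_Icc ⟨by linarith [pi_pos, hΘ.1], hΘ.2⟩
  rw [(hasDerivAt_circleAngle hr₁ hr₂ hr₃ (hcos hΘ₁) (hcos hΘ₂) (hcos hΘ₃)).deriv,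
    (hasDerivAt_circleAngle hr₂ hr₁ hr₃ (hcos hΘ₂) (hcos hΘ₁) (hcos hΘ₃)).deriv,
    circleEdgeLength_comm r₂ r₁, heron_comm]
  have hQ : 0 < circleEdgeLength r₁ r₂ Θ₃ :=
    hr₁.trans (lt_circleEdgeLength hr₁.le hr₂ (hcos hΘ₃))
  have hH := heron_circleEdgeLength_pos hr₁ hr₂ hr₃ (hcos hΘ₁) (hcos hΘ₂) (hcos hΘ₃)
  field_simp
  simp only [circleEdgeLength_sq]
  ring
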